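/- arXiv:1611.03889 — 4 statements merged into one kernel-verified Lean document; each statement's English description precedes it below -/
import Mathlib

section
/- Let G be a biconnected graph and H a biconnected subgraph of G. Then there exists an open ear decomposition E_1, E_2, ..., E_k of G such that H = E_1 ∪ E_2 ∪ ... ∪ E_j for some j ≤ k. -/
open SimpleGraph

universe u

variable {V : Type u}

/-- Two walks with the same endpoints are internally vertex-disjoint. -/
def IntDisjoint {G : SimpleGraph V} {x y : V} (p q : G.Walk x y) : Prop :=
  ∀ v ∈ p.support, v ∈ q.support → v = x ∨ v = y

/-- There are `k` pairwise internally vertex-disjoint `x`-`y` paths in `G`. -/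
def ConnK (G : SimpleGraph V) (k : ℕ) (x y : V) : Prop :=
  ∃ P : Fin k → G.Walk x y, (∀ i, (P i).IsPath) ∧
    ∀ i j, i ≠ j → IntDisjoint (P i) (P j)

/-- `G` is `(Q,r)`-vertex-connected. -/
def QRConn (G : SimpleGraph V) (Q : Set V) (r : V → ℕ) : Prop :=
  ∀ x ∈ Q, ∀ y ∈ Q, x ≠ y → ConnK G (min (r x) (r y)) x y

/-- Delete a vertex (isolate it). -/
def delV (G : SimpleGraph V) (v : V) : SimpleGraph V where
  Adj a b := G.Adj a b ∧ a ≠ v ∧ b ≠ v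
  symm := by constructor; intro a b h; exact ⟨h.1.symm, h.2.2, h.2.1⟩
  loopless := by constructor; intro a h; exact G.loopless.irrefl a h.1

/-- `G` is minimally `(Q,r)`-vertex-connected: it is `(Q,r)`-vertex-connected but
deleting any edge or any vertex destroys this property. -/
def MinQR (G : SimpleGraph V) (Q : Set V) (r : V → ℕ) : Prop :=
  QRConn G Q r ∧ (∀ e ∈ G.edgeSet, ¬ QRConn (G.deleteEdges {e}) Q r) ∧
    ∀ v : V, ¬ QRConn (delV G v) Q r

/-- Biconnected: at least 3 vertices, connected, and no cut vertex. -/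
def Biconnected (G : SimpleGraph V) : Prop :=
  3 ≤ Nat.card V ∧ G.Connected ∧ ∀ v : V, (SimpleGraph.induce {w | w ≠ v} G).Connected

/-- Three-vertex-connected: more than 3 vertices and removing any at most 2
vertices leaves the graph connected. -/
def ThreeConnected (G : SimpleGraph V) : Prop :=
  4 ≤ Nat.card V ∧ ∀ s : Set V, s.ncard ≤ 2 → (SimpleGraph.induce sᶜ G).Connected

/-- Degree of a vertex. -/
noncomputable def vdeg (G : SimpleGraph V) (v : V) : ℕ := (G.neighborSet v).ncard

/-- The contracted version of `G`: suppress all degree-2 vertices.  Two vertices of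
degree `≠ 2` are adjacent iff they are joined by a path all of whose internal
vertices have degree 2. -/
def suppress (G : SimpleGraph V) : SimpleGraph {v : V // vdeg G v ≠ 2} where
  Adj u v := u ≠ v ∧ ∃ p : G.Walk u.1 v.1, p.IsPath ∧
      ∀ w ∈ p.support, w ≠ u.1 → w ≠ v.1 → vdeg G w = 2
  symm := by
    constructor
    rintro u v ⟨hne, p, hp, hint⟩
    refine ⟨hne.symm, p.reverse, hp.reverse, ?_⟩
    intro w hw h1 h2
    rw [SimpleGraph.Walk.support_reverse, List.mem_reverse] at hw
    exact hint w hw h2 h1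
  loopless := by constructor; intro u h; exact h.1 rfl

/-- The removal operation of Holton–Jackson–Saito–Wormald: delete the edge `uv`,
suppress any resulting degree-2 vertices and simplify parallel edges; the edge is
removable when the result is three-connected. -/
def Removable (G : SimpleGraph V) (u v : V) : Prop :=
  ThreeConnected (suppress (G.deleteEdges {s(u, v)}))

/-- An open ear decomposition of `G`: a first ear that is a cycle, followed by
open ears (paths with distinct endpoints) whose endpoints lie on earlier ears and
whose internal vertices are new, the ears partitioning the edge set of `G`. -/
structure OpenEarDecomp (G : SimpleGraph V) where
  k : ℕ
  v0 : V
  C : G.Walk v0 v0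
  hC : C.IsCycle
  a : Fin k → V
  b : Fin k → V
  P : (i : Fin k) → G.Walk (a i) (b i)
  hP : ∀ i, (P i).IsPath
  hopen : ∀ i, a i ≠ b i
  ha : ∀ i : Fin k, a i ∈ C.support ∨ ∃ j : Fin k, j < i ∧ a i ∈ (P j).support
  hb : ∀ i : Fin k, b i ∈ C.support ∨ ∃ j : Fin k, j < i ∧ b i ∈ (P j).support
  hnew : ∀ i : Fin k, ∀ w ∈ (P i).support, w ≠ a i → w ≠ b i →
      w ∉ C.support ∧ ∀ j : Fin k, j < i → w ∉ (P j).support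
  hdisjC : ∀ i : Fin k, ∀ e ∈ (P i).edges, e ∉ C.edges
  hdisjP : ∀ i j : Fin k, i ≠ j → ∀ e ∈ (P i).edges, e ∉ (P j).edges
  hcover : ∀ e ∈ G.edgeSet, e ∈ C.edges ∨ ∃ i : Fin k, e ∈ (P i).edges

/-!
Ears are added greedily. As long as some edge of `G` is uncovered, connectivity provides an
uncovered edge `uv` with `u` already covered; since `G - u` is connected, a walk from `v` to the
covered vertices avoiding `u`, stopped at the first covered vertex it meets, closes an open ear
through `uv`. Appending ears never alters the earlier ones, so starting from an ear decomposition
of `H` (obtained by the same procedure from any cycle of `H`) keeps `H` a prefix union of ears.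
-/

namespace SimpleGraph.Walk

variable {G : SimpleGraph V}

lemma exists_walk_to_first_mem (S : Set V) {v z : V} (p : G.Walk v z) (hz : z ∈ S) :
    ∃ w ∈ S, ∃ q : G.Walk v w, q.support ⊆ p.support ∧
      ∀ x ∈ q.support, x ≠ w → x ∉ S := by
  induction p with
  | nil => exact ⟨_, hz, nil, by simp, by simp⟩
  | @cons v y z h p ih =>
    by_cases hv : v ∈ S
    · exact ⟨v, hv, nil, by simp, by simp⟩
    · obtain ⟨w, hw, q, hsub, hfirst⟩ := ih hz
      refine ⟨w, hw, cons h q, by simpa using List.cons_subset_cons v hsub, ?_⟩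
      simp only [support_cons, List.mem_cons, forall_eq_or_imp]
      exact ⟨fun _ => hv, hfirst⟩

end SimpleGraph.Walk

namespace Biconnected

variable {G : SimpleGraph V}

lemma finite (hG : Biconnected G) : Finite V :=
  Nat.finite_of_card_ne_zero (by have := hG.1; omega)

lemma exists_walk_avoiding (hG : Biconnected G) {u x y : V} (hx : x ≠ u) (hy : y ≠ u) :
    ∃ p : G.Walk x y, u ∉ p.support := by
  obtain ⟨p⟩ := (hG.2.2 u).preconnected ⟨x, hx⟩ ⟨y, hy⟩
  refine ⟨p.map (Embedding.induce _).toHom, fun hu => ?_⟩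
  change u ∈ (p.map (Embedding.induce {w | w ≠ u}).toHom).support at hu
  rw [Walk.support_map, List.mem_map] at hu
  obtain ⟨⟨w, hw⟩, -, hwu⟩ := hu
  exact hw hwu

lemma exists_isCycle (hG : Biconnected G) : ∃ (v : V) (c : G.Walk v v), c.IsCycle := by
  have := hG.finite
  have := Fintype.ofFinite V
  obtain ⟨a, b, c, hab, hac, hbc⟩ := (Fintype.two_lt_card_iff (α := V)).1 <| by
    have := hG.1
    rw [Nat.card_eq_fintype_card] at this
    omega
  obtain ⟨p⟩ := hG.2.1.preconnected a b
  have hp : ¬ p.Nil := Walk.not_nil_of_ne hab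
  set v := p.snd
  have hav : G.Adj a v := p.adj_snd hp
  obtain ⟨w, hwa, hwv⟩ : ∃ w, w ≠ a ∧ w ≠ v := by
    by_cases hvb : v = b
    · exact ⟨c, hac.symm, hvb ▸ hbc.symm⟩
    · exact ⟨b, hab.symm, Ne.symm hvb⟩
  -- `a` and `v` are also joined through `w`, so the edge `av` is not a bridge
  obtain ⟨q₁, hq₁⟩ := hG.exists_walk_avoiding hav.ne hwv
  obtain ⟨q₂, hq₂⟩ := hG.exists_walk_avoiding hwa hav.ne'
  have hbridge : ¬ G.IsBridge s(a, v) := fun hb => by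
    have := isBridge_iff_forall_walk_mem_edges.1 hb (q₁.append q₂)
    rcases List.mem_append.1 (Walk.edges_append q₁ q₂ ▸ this) with h | h
    · exact hq₁ (q₁.snd_mem_support_of_mem_edges h)
    · exact hq₂ (q₂.fst_mem_support_of_mem_edges h)
  have : ¬ G.IsAcyclic := fun h => hbridge (isAcyclic_iff_forall_isBridge.1 h hav)
  simpa [IsAcyclic] using this

end Biconnected

-- An `OpenEarDecomp` without the requirement that the ears cover all edges of `G`.
structure PartialEarDecomp (G : SimpleGraph V) where
  k : ℕ
  v0 : V
  C : G.Walk v0 v0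
  hC : C.IsCycle
  a : Fin k → V
  b : Fin k → V
  P : (i : Fin k) → G.Walk (a i) (b i)
  hP : ∀ i, (P i).IsPath
  hopen : ∀ i, a i ≠ b i
  ha : ∀ i : Fin k, a i ∈ C.support ∨ ∃ j : Fin k, j < i ∧ a i ∈ (P j).support
  hb : ∀ i : Fin k, b i ∈ C.support ∨ ∃ j : Fin k, j < i ∧ b i ∈ (P j).support
  hnew : ∀ i : Fin k, ∀ w ∈ (P i).support, w ≠ a i → w ≠ b i →
      w ∉ C.support ∧ ∀ j : Fin k, j < i → w ∉ (P j).support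
  hdisjC : ∀ i : Fin k, ∀ e ∈ (P i).edges, e ∉ C.edges
  hdisjP : ∀ i j : Fin k, i ≠ j → ∀ e ∈ (P i).edges, e ∉ (P j).edges

namespace PartialEarDecomp

variable {G : SimpleGraph V} (D : PartialEarDecomp G)

def ofCycle {v : V} (c : G.Walk v v) (hc : c.IsCycle) : PartialEarDecomp G where
  k := 0
  v0 := v
  C := c
  hC := hc
  a := Fin.elim0
  b := Fin.elim0
  P := nofun
  hP := nofun
  hopen := nofun
  ha := nofun
  hb := nofun
  hnew := nofun
  hdisjC := nofun
  hdisjP := nofun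

def verts : Set V := {v | v ∈ D.C.support ∨ ∃ i, v ∈ (D.P i).support}

lemma mem_verts {v : V} : v ∈ D.verts ↔ v ∈ D.C.support ∨ ∃ i, v ∈ (D.P i).support :=
  Iff.rfl

def edges : Set (Sym2 V) := {e | e ∈ D.C.edges ∨ ∃ i, e ∈ (D.P i).edges}

def edgesBefore (j : ℕ) : Set (Sym2 V) :=
  {e | e ∈ D.C.edges ∨ ∃ i : Fin D.k, (i : ℕ) < j ∧ e ∈ (D.P i).edges}

lemma edgesBefore_k : D.edgesBefore D.k = D.edges := by
  ext e
  simp [edgesBefore, edges]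

lemma edges_subset_edgeSet : D.edges ⊆ G.edgeSet := by
  rintro e (h | ⟨i, h⟩)
  · exact D.C.edges_subset_edgeSet h
  · exact (D.P i).edges_subset_edgeSet h

lemma mem_verts_of_mem_edges {x y : V} (h : s(x, y) ∈ D.edges) : x ∈ D.verts := by
  rcases h with h | ⟨i, h⟩
  · exact .inl (D.C.fst_mem_support_of_mem_edges h)
  · exact .inr ⟨i, (D.P i).fst_mem_support_of_mem_edges h⟩

lemma v0_mem_verts : D.v0 ∈ D.verts := .inl D.C.start_mem_support

lemma exists_mem_verts_ne (v : V) : ∃ w ∈ D.verts, w ≠ v := by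
  have hC : ¬ D.C.Nil := D.hC.not_nil
  by_cases hv : D.v0 = v
  · exact ⟨D.C.snd, .inl (List.mem_of_mem_tail (D.C.snd_mem_tail_support hC)),
      hv ▸ (D.C.adj_snd hC).ne'⟩
  · exact ⟨D.v0, D.v0_mem_verts, hv⟩

def toOpenEarDecomp (h : G.edgeSet ⊆ D.edges) : OpenEarDecomp G := { D with hcover := h }

structure IsEar {x y : V} (p : G.Walk x y) : Prop where
  ne : x ≠ y
  left_mem : x ∈ D.verts
  right_mem : y ∈ D.verts
  isPath : p.IsPath
  internal_not_mem : ∀ w ∈ p.support, w ≠ x → w ≠ y → w ∉ D.verts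
  edges_not_mem : ∀ e ∈ p.edges, e ∉ D.edges

variable {x y : V} (p : G.Walk x y)

def snocPaths : ∀ i : Fin (D.k + 1),
    G.Walk ((Fin.snoc D.a x : Fin (D.k + 1) → V) i) ((Fin.snoc D.b y : Fin (D.k + 1) → V) i) :=
  Fin.lastCases (p.copy (by simp) (by simp)) fun i => (D.P i).copy (by simp) (by simp)

@[simp] lemma support_snocPaths_last : (D.snocPaths p (Fin.last _)).support = p.support := by
  simp [snocPaths]

@[simp] lemma support_snocPaths_castSucc (i : Fin D.k) :
    (D.snocPaths p i.castSucc).support = (D.P i).support := by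
  simp [snocPaths]

@[simp] lemma edges_snocPaths_last : (D.snocPaths p (Fin.last _)).edges = p.edges := by
  simp [snocPaths]

@[simp] lemma edges_snocPaths_castSucc (i : Fin D.k) :
    (D.snocPaths p i.castSucc).edges = (D.P i).edges := by
  simp [snocPaths]

variable {D p}

def snocEar (hp : D.IsEar p) : PartialEarDecomp G where
  k := D.k + 1
  v0 := D.v0
  C := D.C
  hC := D.hC
  a := Fin.snoc D.a x
  b := Fin.snoc D.b y
  P := D.snocPaths p
  hP := by
    simpa [Fin.forall_iff_castSucc, Walk.isPath_def] using
      ⟨hp.isPath.support_nodup, fun i => (D.hP i).support_nodup⟩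
  hopen := by simpa [Fin.forall_iff_castSucc] using ⟨hp.ne, D.hopen⟩
  ha := by
    simpa [Fin.forall_iff_castSucc, Fin.exists_iff_castSucc, verts,
      (Fin.castSucc_lt_last _).not_gt] using ⟨hp.left_mem, D.ha⟩
  hb := by
    simpa [Fin.forall_iff_castSucc, Fin.exists_iff_castSucc, verts,
      (Fin.castSucc_lt_last _).not_gt] using ⟨hp.right_mem, D.hb⟩
  hnew := by
    have hint := hp.internal_not_mem
    simp only [mem_verts, not_or, not_exists] at hint
    simpa [Fin.forall_iff_castSucc, (Fin.castSucc_lt_last _).not_gt] using ⟨hint, D.hnew⟩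
  hdisjC := by
    simpa [Fin.forall_iff_castSucc] using
      ⟨fun e he hC => hp.edges_not_mem e he (.inl hC), D.hdisjC⟩
  hdisjP := by
    simpa [Fin.forall_iff_castSucc] using
      ⟨fun i _ e he hPi => hp.edges_not_mem e he (.inr ⟨i, hPi⟩),
        fun i => ⟨fun e he hp' => hp.edges_not_mem e hp' (.inr ⟨i, he⟩), D.hdisjP i⟩⟩

def Extends (D D' : PartialEarDecomp G) : Prop :=
  D.k ≤ D'.k ∧ ∀ j ≤ D.k, D'.edgesBefore j = D.edgesBefore j

lemma Extends.refl (D : PartialEarDecomp G) : D.Extends D := ⟨le_rfl, fun _ _ => rfl⟩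

lemma Extends.trans {D₁ D₂ D₃ : PartialEarDecomp G} (h₁₂ : D₁.Extends D₂)
    (h₂₃ : D₂.Extends D₃) : D₁.Extends D₃ :=
  ⟨h₁₂.1.trans h₂₃.1, fun j hj => (h₂₃.2 j (hj.trans h₁₂.1)).trans (h₁₂.2 j hj)⟩

lemma extends_snocEar (hp : D.IsEar p) : D.Extends (snocEar hp) := by
  refine ⟨Nat.le_succ _, fun j hj => ?_⟩
  ext e
  simp [edgesBefore, snocEar, Fin.exists_iff_castSucc, hj.not_gt]

lemma edges_snocEar (hp : D.IsEar p) : (snocEar hp).edges = D.edges ∪ {e | e ∈ p.edges} := by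
  ext e
  simp [edges, snocEar, Fin.exists_iff_castSucc, or_comm, or_left_comm]

section map

variable {W : Type*} {G' : SimpleGraph W} (f : G →g G') (hf : Function.Injective f)

def map : PartialEarDecomp G' where
  k := D.k
  v0 := f D.v0
  C := D.C.map f
  hC := D.hC.map hf
  a := f ∘ D.a
  b := f ∘ D.b
  P i := (D.P i).map f
  hP i := (D.hP i).map hf
  hopen i := hf.ne (D.hopen i)
  ha i := by simpa [Walk.support_map, List.mem_map_of_injective hf] using D.ha i
  hb i := by simpa [Walk.support_map, List.mem_map_of_injective hf] using D.hb i
  hnew i := by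
    simpa only [Walk.support_map, List.forall_mem_map, List.mem_map_of_injective hf,
      Function.comp_apply, hf.ne_iff] using D.hnew i
  hdisjC i := by
    simpa only [Walk.edges_map, List.forall_mem_map,
      List.mem_map_of_injective (Sym2.map.injective hf)] using D.hdisjC i
  hdisjP i j hij := by
    simpa only [Walk.edges_map, List.forall_mem_map,
      List.mem_map_of_injective (Sym2.map.injective hf)] using D.hdisjP i j hij

lemma edges_map : (D.map f hf).edges = Sym2.map f '' D.edges := by
  ext e
  simp [edges, map, Walk.edges_map, or_and_right, exists_or]
  exact or_congr_right
    ⟨fun ⟨i, a, ha, h⟩ => ⟨a, ⟨i, ha⟩, h⟩,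
      fun ⟨a, ⟨i, ha⟩, h⟩ => ⟨i, a, ha, h⟩⟩

end map

lemma exists_adj_mem_verts_not_mem_edges (hG : G.Connected) (h : ¬ G.edgeSet ⊆ D.edges) :
    ∃ u v, G.Adj u v ∧ u ∈ D.verts ∧ s(u, v) ∉ D.edges := by
  obtain ⟨e, he, heD⟩ := Set.not_subset.1 h
  induction e using Sym2.ind with | _ x y =>
  by_cases hx : x ∈ D.verts
  · exact ⟨x, y, he, hx, heD⟩
  obtain ⟨p⟩ := hG.preconnected D.v0 x
  obtain ⟨d, -, hd₁, hd₂⟩ := p.exists_boundary_dart _ D.v0_mem_verts hx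
  exact ⟨d.fst, d.snd, d.adj, hd₁,
    fun hd => hd₂ (D.mem_verts_of_mem_edges (Sym2.eq_swap ▸ hd))⟩

lemma exists_isEar (hG : Biconnected G) (h : ¬ G.edgeSet ⊆ D.edges) :
    ∃ (x y : V) (p : G.Walk x y), D.IsEar p := by
  classical
  obtain ⟨u, v, huv, hu, huvD⟩ := D.exists_adj_mem_verts_not_mem_edges hG.2.1 h
  obtain ⟨z, hz, hzu⟩ := D.exists_mem_verts_ne u
  obtain ⟨q, hqu⟩ := hG.exists_walk_avoiding huv.ne' hzu
  obtain ⟨w, hw, r, hrq, hr⟩ := q.exists_walk_to_first_mem D.verts hz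
  have hru : u ∉ r.support := fun h => hqu (hrq h)
  refine ⟨u, w, (Walk.cons huv r).bypass, fun huw => hru (huw ▸ r.end_mem_support), hu, hw,
    Walk.bypass_isPath _, fun t ht htu htw => ?_, fun e he heD => ?_⟩
  · have ht' := (Walk.cons huv r).support_bypass_subset_support ht
    rw [Walk.support_cons, List.mem_cons] at ht'
    exact hr t (ht'.resolve_left htu) htw
  · have he' := (Walk.cons huv r).edges_bypass_subset_edges he
    rw [Walk.edges_cons, List.mem_cons] at he'
    rcases he' with rfl | he'
    · exact huvD heD
    induction e using Sym2.ind with | _ a b =>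
    have ha : a = w := by_contra fun haw =>
      hr a (r.fst_mem_support_of_mem_edges he') haw (D.mem_verts_of_mem_edges heD)
    have hb : b = w := by_contra fun hbw => hr b (r.snd_mem_support_of_mem_edges he') hbw
      (D.mem_verts_of_mem_edges (Sym2.eq_swap ▸ heD))
    exact (r.adj_of_mem_edges he').ne (ha.trans hb.symm)

lemma edgeSet_diff_snocEar_ssubset (hp : D.IsEar p) :
    G.edgeSet \ (snocEar hp).edges ⊂ G.edgeSet \ D.edges := by
  rw [edges_snocEar, ← Set.sdiff_sdiff, Set.sdiff_ssubset_left_iff]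
  obtain ⟨e, he⟩ :=
    List.exists_mem_of_ne_nil _ (Walk.edges_eq_nil.not.2 (Walk.not_nil_of_ne hp.ne))
  exact ⟨e, ⟨p.edges_subset_edgeSet he, hp.edges_not_mem e he⟩, he⟩

end PartialEarDecomp

namespace Biconnected

variable {G : SimpleGraph V}

open PartialEarDecomp in
lemma exists_extends_covering (hG : Biconnected G) (D : PartialEarDecomp G) :
    ∃ D', D.Extends D' ∧ G.edgeSet ⊆ D'.edges := by
  have := hG.finite
  induction hn : (G.edgeSet \ D.edges).ncard using Nat.strong_induction_on generalizing D with
  | _ n ih =>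
  by_cases hcov : G.edgeSet ⊆ D.edges
  · exact ⟨D, .refl D, hcov⟩
  obtain ⟨x, y, p, hp⟩ := D.exists_isEar hG hcov
  have hlt : (G.edgeSet \ (snocEar hp).edges).ncard < n :=
    hn ▸ Set.ncard_lt_ncard (edgeSet_diff_snocEar_ssubset hp) (Set.toFinite _)
  obtain ⟨D', hD', hcov'⟩ := ih _ hlt (snocEar hp) rfl
  exact ⟨D', (extends_snocEar hp).trans hD', hcov'⟩

lemma exists_covering (hG : Biconnected G) :
    ∃ D : PartialEarDecomp G, G.edgeSet ⊆ D.edges := by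
  obtain ⟨v, c, hc⟩ := hG.exists_isCycle
  obtain ⟨D, -, hD⟩ := hG.exists_extends_covering (.ofCycle c hc)
  exact ⟨D, hD⟩

end Biconnected

/-- For any biconnected subgraph `H` of a biconnected graph `G`
there is an open ear decomposition of `G` of which `H` is the union of a prefix
of ears. -/
theorem stmt_1 (G : SimpleGraph V) (H : G.Subgraph)
    (hG : Biconnected G) (hH : Biconnected H.coe) :
    ∃ D : OpenEarDecomp G, ∃ j : ℕ, j ≤ D.k ∧
      ∀ e : Sym2 V, e ∈ H.edgeSet ↔
        (e ∈ D.C.edges ∨ ∃ i : Fin D.k, (i : ℕ) < j ∧ e ∈ (D.P i).edges) := by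
  obtain ⟨DH, hDH⟩ := hH.exists_covering
  obtain ⟨D, hD, hcov⟩ := hG.exists_extends_covering (DH.map H.hom H.hom_injective)
  have hH_edges := hD.2 _ le_rfl
  rw [PartialEarDecomp.edgesBefore_k, PartialEarDecomp.edges_map,
    DH.edges_subset_edgeSet.antisymm hDH, Subgraph.coe_hom,
    H.image_coe_edgeSet_coe] at hH_edges
  exact ⟨D.toOpenEarDecomp hcov, DH.k, hD.1, fun e => Set.ext_iff.1 hH_edges.symm e⟩
end

section
/- Let H be a contracted minimal Q-triconnected graph with |Q| > 2. Then for any two terminals t_1, t_2 ∈ Q, there do not exist three parallel edges between t_1 and t_2 in H. -/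
universe u

variable {V : Type u}

/-- A loopless multigraph given by edge multiplicities. -/
structure MGraph (V : Type u) where
  m : Sym2 V → ℕ
  loopless : ∀ v : V, m s(v, v) = 0

/-- Adjacency in a multigraph. -/
def MGraph.Adj (G : MGraph V) (a b : V) : Prop := 0 < G.m s(a, b)

/-- A simple path from `x` to `y`, given as its list of vertices. -/
def MGraph.IsPathL (G : MGraph V) (x y : V) (l : List V) : Prop :=
  l.head? = some x ∧ l.getLast? = some y ∧ l.Nodup ∧ l.Chain' G.Adj

/-- The path (vertex list) `l` uses the edge `e`. -/
def usesEdge (l : List V) (e : Sym2 V) : Prop :=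
  ∃ p ∈ l.zip l.tail, s(p.1, p.2) = e

/-- There are `k` internally vertex-disjoint `x`-`y` paths, respecting edge
multiplicities (parallel edges may be used by distinct paths). -/
def MGraph.ConnKM (G : MGraph V) (k : ℕ) (x y : V) : Prop :=
  ∃ P : Fin k → List V, (∀ i, G.IsPathL x y (P i)) ∧
    (∀ i j, i ≠ j → ∀ v ∈ P i, v ∈ P j → v = x ∨ v = y) ∧
    ∀ e : Sym2 V, Nat.card {i : Fin k // usesEdge (P i) e} ≤ G.m e

open scoped Classical in
/-- Delete one copy of the edge `e`. -/
noncomputable def MGraph.delE (G : MGraph V) (e : Sym2 V) : MGraph V where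
  m f := if f = e then G.m f - 1 else G.m f
  loopless := by intro v; split <;> simp [G.loopless v]

open scoped Classical in
/-- Delete the vertex `v` (remove all edges at `v`). -/
noncomputable def MGraph.delV (G : MGraph V) (v : V) : MGraph V where
  m f := if v ∈ f then 0 else G.m f
  loopless := by intro w; split <;> simp [G.loopless w]

/-- `G` is `Q`-triconnected. -/
def MGraph.QTri (G : MGraph V) (Q : Set V) : Prop :=
  ∀ x ∈ Q, ∀ y ∈ Q, x ≠ y → G.ConnKM 3 x y

/-- `G` is minimally `Q`-triconnected: deleting any edge or vertex destroys
`Q`-triconnectivity. -/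
def MGraph.MinQTri (G : MGraph V) (Q : Set V) : Prop :=
  G.QTri Q ∧ (∀ e : Sym2 V, 0 < G.m e → ¬ (G.delE e).QTri Q) ∧
    ∀ v : V, ¬ (G.delV v).QTri Q

/-- The degree of a vertex, counting multiplicities. -/
noncomputable def MGraph.deg [Fintype V] (G : MGraph V) (v : V) : ℕ :=
  ∑ u : V, G.m s(v, u)

/-! If three parallel edges joined terminals `t₁` and `t₂`, deleting one copy would keep the graph
`Q`-triconnected, against minimality. For the pair `t₁, t₂` the two remaining copies are two of the
paths, and the third one goes through a third terminal `t₃` (there is one since `|Q| > 2`): a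
`t₁`-`t₃` path avoiding `t₂` spliced with a `t₃`-`t₂` path avoiding `t₁` never steps from `t₁` to
`t₂`. For any other pair, internally disjoint paths can share an edge only if it joins their ends,
so at most one of them uses the edge `t₁t₂`, which keeps at least two copies. -/

namespace List

variable {α : Type*}

lemma mem_of_mem_zip_tail {l : List α} {q : α × α} (h : q ∈ l.zip l.tail) :
    q.1 ∈ l ∧ q.2 ∈ l :=
  ⟨(of_mem_zip h).1, mem_of_mem_tail (of_mem_zip h).2⟩

lemma IsChain.rel_of_mem_zip_tail {R : α → α → Prop} :
    ∀ {l : List α}, l.IsChain R → ∀ q ∈ l.zip l.tail, R q.1 q.2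
  | [], _, _, h | [_], _, _, h => by simp at h
  | a :: b :: l, hc, q, hq => by
    rw [isChain_cons_cons] at hc
    rcases mem_cons.mp hq with rfl | hq
    · exact hc.1
    · exact hc.2.rel_of_mem_zip_tail q hq

/-- Splicing `A` into `B` at the first vertex of `A` that lies on `B`. -/
theorem exists_splice {R : α → α → Prop} {B : List α} (hB : B.Nodup) (hBc : B.IsChain R) :
    ∀ {A : List α}, A.Nodup → A.IsChain R → (∃ v ∈ A, v ∈ B) →
      ∃ p : List α, p.head? = A.head? ∧ p.getLast? = B.getLast? ∧ p.Nodup ∧ p.IsChain R ∧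
        p ⊆ A ++ B ∧ ∀ q ∈ p.zip p.tail, (q.1 ∈ A ∧ q.2 ∈ A) ∨ (q.1 ∈ B ∧ q.2 ∈ B)
  | [], _, _, ⟨_, hv, _⟩ => by simp at hv
  | a :: A, hA, hAc, hAB => by
    by_cases haB : a ∈ B
    · obtain ⟨B₁, B₂, rfl⟩ := append_of_mem haB
      have hsuf : a :: B₂ <:+ B₁ ++ a :: B₂ := suffix_append _ _
      refine ⟨a :: B₂, rfl, by simp [getLast?_cons], hB.sublist hsuf.sublist, hBc.suffix hsuf,
        fun v hv => mem_append_right _ (hsuf.subset hv), fun q hq => Or.inr ?_⟩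
      exact (mem_of_mem_zip_tail hq).imp (hsuf.subset ·) (hsuf.subset ·)
    · obtain ⟨haA, hA⟩ := nodup_cons.mp hA
      obtain ⟨hhead, hAc⟩ := isChain_cons.mp hAc
      have hAB : ∃ v ∈ A, v ∈ B := by
        obtain ⟨v, hv, hvB⟩ := hAB
        exact ⟨v, (mem_cons.mp hv).resolve_left (by rintro rfl; exact haB hvB), hvB⟩
      obtain ⟨p, hph, hpl, hp, hpc, hpsub, hpq⟩ := exists_splice hB hBc hA hAc hAB
      obtain ⟨b, p, rfl⟩ : ∃ b p', p = b :: p' := by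
        refine exists_cons_of_ne_nil ?_
        rintro rfl
        obtain ⟨v, -, hvB⟩ := hAB
        simp [eq_comm, getLast?_eq_none_iff, ne_nil_of_mem hvB] at hpl
      have hbA : b ∈ A := mem_of_mem_head? hph.symm
      refine ⟨a :: b :: p, rfl, by simpa using hpl, nodup_cons.mpr ⟨fun ha => ?_, hp⟩,
        isChain_cons_cons.mpr ⟨hhead b hph.symm, hpc⟩, ?_, fun q hq => ?_⟩
      · rcases mem_append.mp (hpsub ha) with h | h
        exacts [haA h, haB h]
      · intro v hv
        rcases mem_cons.mp hv with rfl | hv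
        · exact mem_append_left _ mem_cons_self
        · rcases mem_append.mp (hpsub hv) with h | h
          exacts [mem_append_left _ (mem_cons_of_mem _ h), mem_append_right _ h]
      · rcases mem_cons.mp hq with rfl | hq
        · exact Or.inl ⟨mem_cons_self, mem_cons_of_mem _ hbA⟩
        · exact (hpq q hq).imp_left (And.imp (mem_cons_of_mem _) (mem_cons_of_mem _))

end List

lemma Set.exists_mem_ne_ne_of_two_lt_ncard {α : Type*} {s : Set α} (hs : 2 < s.ncard) (a b : α) :
    ∃ c ∈ s, c ≠ a ∧ c ≠ b := by
  by_contra! h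
  have hsub : s ⊆ {a, b} := fun c hc => by
    by_cases hca : c = a
    · exact Or.inl hca
    · exact Or.inr (h c hc hca)
  have := (Set.ncard_le_ncard hsub).trans (Set.ncard_insert_le a {b})
  rw [Set.ncard_singleton] at this
  omega

lemma usesEdge.mem {l : List V} {a b : V} (h : usesEdge l s(a, b)) : a ∈ l ∧ b ∈ l := by
  obtain ⟨q, hq, he⟩ := h
  have hq := List.mem_of_mem_zip_tail hq
  rcases Sym2.eq_iff.mp he with ⟨rfl, rfl⟩ | ⟨rfl, rfl⟩
  exacts [hq, hq.symm]

@[simp]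
lemma usesEdge_pair {x y : V} {e : Sym2 V} : usesEdge [x, y] e ↔ s(x, y) = e := by
  simp [usesEdge]

lemma Nat.card_subtype_le_card {ι : Type*} {P : ι → Prop} (s : Finset ι) (h : ∀ i, P i → i ∈ s) :
    Nat.card {i // P i} ≤ s.card :=
  (Set.ncard_le_ncard (t := (s : Set ι)) h).trans_eq (Set.ncard_coe_finset s)

namespace MGraph

variable {G : MGraph V} {x y : V} {e : Sym2 V}

lemma pos_of_usesEdge {l : List V} (hl : l.IsChain G.Adj) (h : usesEdge l e) : 0 < G.m e := by
  obtain ⟨q, hq, rfl⟩ := h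
  exact hl.rel_of_mem_zip_tail q hq

@[simp]
lemma delE_m_self : (G.delE e).m e = G.m e - 1 := by
  simp [delE]

lemma delE_m_of_ne {f : Sym2 V} (h : f ≠ e) : (G.delE e).m f = G.m f := by
  simp [delE, h]

lemma IsPathL.delE {l : List V} (he : 2 ≤ G.m e) (h : G.IsPathL x y l) :
    (G.delE e).IsPathL x y l := by
  refine ⟨h.1, h.2.1, h.2.2.1, h.2.2.2.imp fun {a b} (hab : 0 < G.m s(a, b)) => ?_⟩
  show 0 < (G.delE e).m s(a, b)
  by_cases hae : s(a, b) = e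
  · rw [hae, delE_m_self]; omega
  · rwa [delE_m_of_ne hae]

lemma ConnKM.exists_isPathL_not_mem {k : ℕ} (h : G.ConnKM k x y) (hk : 2 ≤ k) {c : V}
    (hcx : c ≠ x) (hcy : c ≠ y) : ∃ l, G.IsPathL x y l ∧ c ∉ l := by
  obtain ⟨P, hP, hdisj, -⟩ := h
  by_contra! hc
  rcases hdisj ⟨0, by omega⟩ ⟨1, by omega⟩ (by simp) c (hc _ (hP _)) (hc _ (hP _)) with h | h
  exacts [hcx h, hcy h]

lemma exists_isPathL_not_usesEdge {z : V} {A B : List V} (hA : G.IsPathL x z A) (hyA : y ∉ A)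
    (hB : G.IsPathL z y B) (hxB : x ∉ B) : ∃ p, G.IsPathL x y p ∧ ¬ usesEdge p s(x, y) := by
  have hz : ∃ v ∈ A, v ∈ B :=
    ⟨z, List.mem_of_getLast? hA.2.1, List.mem_of_mem_head? hB.1⟩
  obtain ⟨p, hph, hpl, hp, hpc, -, hpq⟩ := List.exists_splice hB.2.2.1 hB.2.2.2 hA.2.2.1 hA.2.2.2 hz
  refine ⟨p, ⟨hph.trans hA.1, hpl.trans hB.2.1, hp, hpc⟩, ?_⟩
  rintro ⟨q, hq, he⟩
  rcases Sym2.eq_iff.mp he with ⟨rfl, rfl⟩ | ⟨rfl, rfl⟩ <;>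
    rcases hpq q hq with ⟨h1, h2⟩ | ⟨h1, h2⟩
  exacts [hyA h2, hxB h1, hyA h1, hxB h2]

lemma ConnKM.delE_of_ne {k : ℕ} (h : G.ConnKM k x y) (he : 2 ≤ G.m e) (hne : e ≠ s(x, y)) :
    (G.delE e).ConnKM k x y := by
  obtain ⟨P, hP, hdisj, hcount⟩ := h
  refine ⟨P, fun i => (hP i).delE he, hdisj, fun f => ?_⟩
  by_cases hfe : f = e
  · subst hfe
    have hsub : Subsingleton {i // usesEdge (P i) f} := by
      refine ⟨fun ⟨i, hi⟩ ⟨j, hj⟩ => Subtype.ext (not_not.mp fun hij => ?_)⟩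
      induction f using Sym2.ind with | h a b => ?_
      obtain ⟨hai, hbi⟩ := hi.mem
      obtain ⟨haj, hbj⟩ := hj.mem
      rcases hdisj i j hij a hai haj with rfl | rfl <;>
        rcases hdisj i j hij b hbi hbj with rfl | rfl <;>
        simp_all [G.loopless, Sym2.eq_swap]
    have hcard : Nat.card {i // usesEdge (P i) f} ≤ 1 :=
      Finite.card_le_one_iff_subsingleton.mpr hsub
    rw [delE_m_self]
    omega
  · rw [delE_m_of_ne hfe]
    exact hcount f

lemma connKM_three_delE_of_isPathL (hm : 3 ≤ G.m s(x, y)) (hxy : x ≠ y) {p : List V}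
    (hp : G.IsPathL x y p) (hpxy : ¬ usesEdge p s(x, y)) :
    (G.delE s(x, y)).ConnKM 3 x y := by
  have hedge : G.IsPathL x y [x, y] :=
    ⟨rfl, rfl, by simp [hxy], List.isChain_pair.mpr (show 0 < G.m s(x, y) by omega)⟩
  refine ⟨![[x, y], [x, y], p], ?_, ?_, fun f => ?_⟩
  · intro i
    fin_cases i <;> exact IsPathL.delE (by omega) ‹_›
  · intro i j hij v hvi hvj
    fin_cases i <;> fin_cases j <;> simp_all
  · by_cases hf : f = s(x, y)
    · subst hf
      refine (Nat.card_subtype_le_card {0, 1} fun i hi => ?_).trans ?_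
      · fin_cases i <;> simp_all
      · simp only [delE_m_self, Finset.card_pair (show (0 : Fin 3) ≠ 1 by decide)]
        omega
    · rw [delE_m_of_ne hf]
      by_cases hu : usesEdge p f
      · refine (Nat.card_subtype_le_card {2} fun i hi => ?_).trans (pos_of_usesEdge hp.2.2.2 hu)
        fin_cases i <;> simp_all
      · refine (Nat.card_subtype_le_card ∅ fun i hi => ?_).trans (Nat.zero_le _)
        fin_cases i <;> simp_all

lemma ConnKM.delE_self_of_three_le {z : V} (hxz : G.ConnKM 3 x z) (hzy : G.ConnKM 3 z y)
    (hzx : z ≠ x) (hzy' : z ≠ y) (hxy : x ≠ y) (hm : 3 ≤ G.m s(x, y)) :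
    (G.delE s(x, y)).ConnKM 3 x y := by
  obtain ⟨A, hA, hyA⟩ := hxz.exists_isPathL_not_mem (by norm_num) hxy.symm hzy'.symm
  obtain ⟨B, hB, hxB⟩ := hzy.exists_isPathL_not_mem (by norm_num) hzx.symm hxy
  obtain ⟨p, hp, hpxy⟩ := exists_isPathL_not_usesEdge hA hyA hB hxB
  exact connKM_three_delE_of_isPathL hm hxy hp hpxy

lemma QTri.delE_of_three_le {Q : Set V} (hG : G.QTri Q) {t₁ t₂ t₃ : V} (h₃ : t₃ ∈ Q)
    (h₃₁ : t₃ ≠ t₁) (h₃₂ : t₃ ≠ t₂) (hm : 3 ≤ G.m s(t₁, t₂)) :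
    (G.delE s(t₁, t₂)).QTri Q := by
  intro x hx y hy hxy
  by_cases he : s(t₁, t₂) = s(x, y)
  · rcases Sym2.eq_iff.mp he with ⟨rfl, rfl⟩ | ⟨rfl, rfl⟩
    · exact (hG _ hx _ h₃ h₃₁.symm).delE_self_of_three_le (hG _ h₃ _ hy h₃₂) h₃₁ h₃₂ hxy hm
    · rw [Sym2.eq_swap] at hm ⊢
      exact (hG _ hx _ h₃ h₃₂.symm).delE_self_of_three_le (hG _ h₃ _ hy h₃₁) h₃₂ h₃₁ hxy hm
  · exact (hG x hx y hy hxy).delE_of_ne (by omega) he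

end MGraph

theorem stmt_4_general (H : MGraph V) (Q : Set V)
    (hmin : H.MinQTri Q)
    (hQ : 2 < Q.ncard) :
    ∀ t1 ∈ Q, ∀ t2 ∈ Q, H.m s(t1, t2) < 3 := by
  intro t1 _ t2 _
  by_contra! hm
  obtain ⟨t3, ht3, h31, h32⟩ := Set.exists_mem_ne_ne_of_two_lt_ncard hQ t1 t2
  exact hmin.2.1 _ (by omega) (hmin.1.delE_of_three_le ht3 h31 h32 hm)

/-- In a contracted minimal `Q`-triconnected multigraph with more
than two terminals, no two terminals are joined by three parallel edges. -/
theorem stmt_4 [Fintype V] (H : MGraph V) (Q : Set V)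
    (hmin : H.MinQTri Q) (hcontracted : ∀ v : V, H.deg v ≠ 2)
    (hQ : 2 < Q.ncard) :
    ∀ t1 ∈ Q, ∀ t2 ∈ Q, H.m s(t1, t2) < 3 :=
  stmt_4_general H Q hmin hQ
end

section
/- Let G be a simple 3-vertex-connected graph with at least six vertices and e an edge of G. Then e is nonremovable if and only if there exists a set S of exactly two vertices such that G − e − S has exactly two connected components A and B with |A| ≥ 2 and |B| ≥ 2. -/
/-!
Write `H = G - uv`. Since `G` has minimum degree at least `3`, only `u` and `v` can have degree
`2` in `H`, and suppressing them does not change which of the remaining vertices are joined in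
`H - S`. So `G ⊖ uv` fails to be three-connected exactly when some set `S` of at most two vertices
separates two vertices `x`, `y` of degree `≠ 2` in `H - S`. As `G - S` is connected, `H - S` then
consists of the component `A` of `u` and the component `B` of `v`, with `x` and `y` on different
sides. A side reduced to `{u}` would make `u` a degree-`2` vertex, so `|A|, |B| ≥ 2`; and `|S| = 2`,
for otherwise `S ∪ {u}` would separate `G`. Conversely, `uv` must cross any such separation of
`H`, since `G - S` is connected, and then `S` separates `a ∈ A - u` from `b ∈ B - v` in `G ⊖ uv`.
-/

open SimpleGraph

universe u

variable {V : Type u}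

section Reachability

variable {W W' : Type*}

lemma SimpleGraph.Reachable.of_adj_reachable {K : SimpleGraph W} {K' : SimpleGraph W'}
    (f : W → W') (h : ∀ a b, K.Adj a b → K'.Reachable (f a) (f b)) {x y : W}
    (hxy : K.Reachable x y) : K'.Reachable (f x) (f y) := by
  rw [reachable_iff_reflTransGen] at hxy ⊢
  exact hxy.lift' f fun a b hab => (reachable_iff_reflTransGen _ _).1 (h a b hab)

lemma SimpleGraph.not_reachable_induce_of_partition {K : SimpleGraph W} {S A B : Set W}
    (hd : Disjoint A B) (hAB : A ∪ B = Sᶜ) (hno : ∀ a ∈ A, ∀ b ∈ B, ¬ K.Adj a b)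
    {x y : ↥Sᶜ} (hx : x.1 ∈ A) (hy : y.1 ∈ B) : ¬ (K.induce Sᶜ).Reachable x y := by
  rintro ⟨p⟩
  induction p with
  | nil => exact hd.ne_of_mem hx hy rfl
  | cons hadj q ih =>
    rename_i a c b
    have hc : c.1 ∈ A ∪ B := by rw [hAB]; exact c.2
    exact ih (hc.resolve_right fun hcB => hno _ hx _ hcB hadj) hy

def SimpleGraph.reachSet (K : SimpleGraph W) (s : Set W) (a : s) : Set W :=
  {w | ∃ h : w ∈ s, (K.induce s).Reachable a ⟨w, h⟩}

lemma SimpleGraph.mem_reachSet_self (K : SimpleGraph W) (s : Set W) (a : s) :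
    a.1 ∈ K.reachSet s a :=
  ⟨a.2, .rfl⟩

lemma SimpleGraph.mem_reachSet_of_adj {K : SimpleGraph W} {s : Set W} {a : s} {b c : W}
    (hb : b ∈ K.reachSet s a) (hc : c ∈ s) (hbc : K.Adj b c) : c ∈ K.reachSet s a :=
  ⟨hc, hb.2.trans (show (K.induce s).Adj ⟨b, hb.1⟩ ⟨c, hc⟩ from hbc).reachable⟩

lemma SimpleGraph.reachable_of_mem_reachSet {K : SimpleGraph W} {s : Set W} {a : s} {b c : W}
    (hb : b ∈ K.reachSet s a) (hc : c ∈ K.reachSet s a) :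
    (K.induce s).Reachable ⟨b, hb.1⟩ ⟨c, hc.1⟩ :=
  hb.2.symm.trans hc.2

lemma SimpleGraph.connected_induce_reachSet (K : SimpleGraph W) (s : Set W) (a : s) :
    (K.induce (K.reachSet s a)).Connected := by
  have key : ∀ {b c : s} (p : (K.induce s).Walk b c) (hb : b.1 ∈ K.reachSet s a),
      (K.induce (K.reachSet s a)).Reachable ⟨b, hb⟩
        ⟨c, ⟨c.2, hb.2.trans ⟨p⟩⟩⟩ := by
    intro b c p hb
    induction p with
    | nil => rfl
    | cons hadj q ih =>
      rename_i b d c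
      have hd := mem_reachSet_of_adj hb d.2 hadj
      exact (show (K.induce (K.reachSet s a)).Adj ⟨b, hb⟩ ⟨d, hd⟩ from hadj).reachable.trans
        (ih hd)
  refine (connected_iff_exists_forall_reachable _).2 ⟨⟨a, K.mem_reachSet_self s a⟩, ?_⟩
  rintro ⟨w, hws, ⟨p⟩⟩
  exact key p _

lemma SimpleGraph.vdeg_le_ncard_compl_of_reachSet_subset [Finite W] {K : SimpleGraph W}
    {s : Set W} {a : s} (h : K.reachSet s a ⊆ {a.1}) : vdeg K a ≤ sᶜ.ncard := by
  refine Set.ncard_le_ncard fun c hc hcs => ?_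
  have : c = a.1 := h (mem_reachSet_of_adj (K.mem_reachSet_self s a) hcs hc)
  exact K.loopless.irrefl _ (this ▸ hc)

end Reachability

section DeleteEdge

variable {G : SimpleGraph V} {u v : V}

lemma Sym2.mk_ne_mk_of_ne_of_ne {α : Type*} {a b c d : α} (hac : a ≠ c) (had : a ≠ d) :
    s(a, b) ≠ s(c, d) := by
  rw [Ne, Sym2.eq_iff]
  tauto

lemma SimpleGraph.deleteEdges_adj_iff_of_ne {a b : V} (h : s(a, b) ≠ s(u, v)) :
    (G.deleteEdges {s(u, v)}).Adj a b ↔ G.Adj a b := by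
  rw [deleteEdges_adj, Set.mem_singleton_iff]
  exact and_iff_left h

lemma SimpleGraph.induce_deleteEdges_of_notMem {t : Set V} (hu : u ∉ t) :
    (G.deleteEdges {s(u, v)}).induce t = G.induce t := by
  ext a b
  exact deleteEdges_adj_iff_of_ne
    (Sym2.mk_ne_mk_of_ne_of_ne (ne_of_mem_of_not_mem a.2 hu).symm
      (ne_of_mem_of_not_mem b.2 hu).symm).symm

lemma SimpleGraph.reachable_induce_deleteEdges_or {s : Set V} (hu : u ∈ s) (hv : v ∈ s)
    {x z : s} (h : (G.induce s).Reachable x z) :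
    ((G.deleteEdges {s(u, v)}).induce s).Reachable x z ∨
      ((G.deleteEdges {s(u, v)}).induce s).Reachable ⟨u, hu⟩ z ∨
      ((G.deleteEdges {s(u, v)}).induce s).Reachable ⟨v, hv⟩ z := by
  obtain ⟨p⟩ := h
  induction p with
  | nil => exact Or.inl .rfl
  | cons hadj q ih =>
    rename_i x c z
    by_cases hH : (G.deleteEdges {s(u, v)}).Adj x c
    · exact ih.imp_left (show ((G.deleteEdges {s(u, v)}).induce s).Adj x c from hH).reachable.trans
    · have : s(x.1, c.1) = s(u, v) := by
        by_contra hne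
        exact hH (deleteEdges_adj.2 ⟨hadj, hne⟩)
      rcases Sym2.eq_iff.1 this with ⟨hx, hc⟩ | ⟨hx, hc⟩
      · obtain rfl : c = ⟨v, hv⟩ := Subtype.ext hc
        rcases ih with h | h | h <;> simp [h]
      · obtain rfl : c = ⟨u, hu⟩ := Subtype.ext hc
        rcases ih with h | h | h <;> simp [h]

lemma vdeg_deleteEdges_of_ne {w : V} (hwu : w ≠ u) (hwv : w ≠ v) :
    vdeg (G.deleteEdges {s(u, v)}) w = vdeg G w := by
  unfold vdeg
  congr 1
  ext x
  exact deleteEdges_adj_iff_of_ne (Sym2.mk_ne_mk_of_ne_of_ne hwu hwv)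

lemma vdeg_deleteEdges_add_one [Finite V] (he : G.Adj u v) :
    vdeg (G.deleteEdges {s(u, v)}) u + 1 = vdeg G u := by
  have : (G.deleteEdges {s(u, v)}).neighborSet u = G.neighborSet u \ {v} := by
    ext x
    simp only [mem_neighborSet, deleteEdges_adj, Set.mem_singleton_iff, Sym2.congr_right,
      Set.mem_sdiff]
  unfold vdeg
  rw [this, Set.ncard_sdiff_singleton_add_one (show v ∈ G.neighborSet u from he)]

end DeleteEdge

section ThreeConnected

variable {G : SimpleGraph V}

lemma exists_not_reachable_of_not_threeConnected {W : Type*} {K : SimpleGraph W}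
    (hcard : 4 ≤ Nat.card W) (h : ¬ ThreeConnected K) :
    ∃ s : Set W, s.ncard ≤ 2 ∧ ∃ x y : ↥sᶜ, ¬ (K.induce sᶜ).Reachable x y := by
  simp only [ThreeConnected, hcard, true_and, not_forall] at h
  obtain ⟨s, hs, hconn⟩ := h
  have hne : Nonempty ↥sᶜ := by
    by_contra hempty
    have : s = Set.univ := by simpa [Set.eq_univ_iff_forall] using hempty
    rw [this, Set.ncard_univ] at hs
    omega
  have hpre : ¬ (K.induce sᶜ).Preconnected := fun hp => hconn ((connected_iff _).2 ⟨hp, hne⟩)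
  simp only [Preconnected, not_forall] at hpre
  exact ⟨s, hs, hpre⟩

lemma ThreeConnected.finite (h3 : ThreeConnected G) : Finite V :=
  Nat.finite_of_card_ne_zero (by have := h3.1; omega)

lemma ThreeConnected.exists_adj_of_partition (h3 : ThreeConnected G) {S A B : Set V}
    (hS : S.ncard ≤ 2) (hd : Disjoint A B) (hAB : A ∪ B = Sᶜ) {a b : V} (ha : a ∈ A)
    (hb : b ∈ B) : ∃ a ∈ A, ∃ b ∈ B, G.Adj a b := by
  by_contra! hno
  have haS : a ∈ Sᶜ := hAB ▸ Or.inl ha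
  have hbS : b ∈ Sᶜ := hAB ▸ Or.inr hb
  exact not_reachable_induce_of_partition (x := ⟨a, haS⟩) (y := ⟨b, hbS⟩) hd hAB hno ha hb
    ((h3.2 S hS).preconnected _ _)

lemma ThreeConnected.three_le_vdeg (h3 : ThreeConnected G) (w : V) : 3 ≤ vdeg G w := by
  have := h3.finite
  by_contra! hlt
  have hw : w ∈ (G.neighborSet w)ᶜ := fun h => G.loopless.irrefl _ h
  obtain ⟨z, hz, hzw⟩ := Set.exists_ne_of_one_lt_ncard (s := (G.neighborSet w)ᶜ) (by
    have := Set.ncard_add_ncard_compl (G.neighborSet w)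
    have := h3.1
    unfold vdeg at hlt
    omega) w
  obtain ⟨p⟩ := (h3.2 _ (Nat.lt_succ_iff.1 hlt)).preconnected ⟨w, hw⟩ ⟨z, hz⟩
  cases p with
  | nil => exact hzw rfl
  | cons hadj q =>
    rename_i c
    exact c.2 hadj

end ThreeConnected

section Suppress

variable {W : Type*} {K : SimpleGraph W}

lemma val_val_mem_compl_image_val {p : W → Prop} {s : Set (Subtype p)} (z : ↥sᶜ) :
    z.1.1 ∈ (Subtype.val '' s)ᶜ :=
  fun h => z.2 (Subtype.val_injective.mem_set_image.1 h)

lemma notMem_image_val_of_vdeg_eq_two {s' : Set {w // vdeg K w ≠ 2}} {w : W}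
    (hw : vdeg K w = 2) : w ∉ Subtype.val '' s' := by
  rintro ⟨z, -, rfl⟩
  exact z.2 hw

lemma reachable_induce_suppress_of_walk_of_vdeg_eq_two {s' : Set {w // vdeg K w ≠ 2}}
    {a b : ↥s'ᶜ} (q : K.Walk a.1.1 b.1.1)
    (hq : ∀ w ∈ q.support, w ≠ a.1.1 → w ≠ b.1.1 → vdeg K w = 2) :
    ((suppress K).induce s'ᶜ).Reachable a b := by
  classical
  by_cases hab : a = b
  · exact hab ▸ .rfl
  · exact Adj.reachable (show (suppress K).Adj a.1 b.1 from ⟨fun h => hab (Subtype.ext h),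
      q.bypass, q.bypass_isPath, fun w hw => hq w (q.support_bypass_subset_support hw)⟩)

/-- The induction invariant: `a` is the last vertex of degree `≠ 2` passed so far, and `q` runs
from it to the current vertex `c` through vertices of degree `2` only. -/
lemma reachable_induce_suppress_of_walk {s' : Set {w // vdeg K w ≠ 2}} {b : ↥s'ᶜ} {c e : W}
    (p : K.Walk c e) (he : e = b.1.1) (hp : ∀ w ∈ p.support, w ∉ Subtype.val '' s')
    (a : ↥s'ᶜ) (q : K.Walk a.1.1 c) (hq : ∀ w ∈ q.support, w ≠ a.1.1 → vdeg K w = 2) :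
    ((suppress K).induce s'ᶜ).Reachable a b := by
  induction p generalizing a with
  | nil =>
    subst he
    exact reachable_induce_suppress_of_walk_of_vdeg_eq_two q fun w hw hwa _ => hq w hw hwa
  | cons hcd p' ih =>
    rename_i c d e
    have hq' : ∀ w ∈ (q.concat hcd).support, w ≠ a.1.1 → w ≠ d → vdeg K w = 2 := by
      intro w hw hwa hwd
      rw [Walk.support_concat, List.mem_append, List.mem_singleton] at hw
      exact hw.elim (hq w · hwa) (absurd · hwd)
    have hp' : ∀ w ∈ p'.support, w ∉ Subtype.val '' s' := fun w hw =>
      hp w (List.mem_cons_of_mem _ hw)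
    by_cases hd : vdeg K d = 2
    · refine ih he hp' a (q.concat hcd) fun w hw hwa => ?_
      by_cases hwd : w = d
      · exact hwd ▸ hd
      · exact hq' w hw hwa hwd
    · have hd' : (⟨d, hd⟩ : {w // vdeg K w ≠ 2}) ∈ s'ᶜ := fun h =>
        hp' d p'.start_mem_support ⟨_, h, rfl⟩
      exact (reachable_induce_suppress_of_walk_of_vdeg_eq_two (b := ⟨_, hd'⟩) _ hq').trans
        (ih he hp' ⟨_, hd'⟩ .nil (by simp))

theorem reachable_induce_suppress_iff {s' : Set {w // vdeg K w ≠ 2}} {x y : ↥s'ᶜ} :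
    ((suppress K).induce s'ᶜ).Reachable x y ↔
      (K.induce (Subtype.val '' s')ᶜ).Reachable
        ⟨x.1.1, val_val_mem_compl_image_val x⟩ ⟨y.1.1, val_val_mem_compl_image_val y⟩ := by
  constructor
  · refine Reachable.of_adj_reachable
      (fun z : ↥s'ᶜ => (⟨z.1.1, val_val_mem_compl_image_val z⟩ : ↥(Subtype.val '' s')ᶜ))
      fun z z' hzz' => ?_
    obtain ⟨-, r, -, hr⟩ := (hzz' : (suppress K).Adj z.1 z'.1)
    have hsup : ∀ w ∈ r.support, w ∈ (Subtype.val '' s')ᶜ := by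
      intro w hw
      by_cases hwz : w = z.1.1
      · exact hwz ▸ val_val_mem_compl_image_val z
      by_cases hwz' : w = z'.1.1
      · exact hwz' ▸ val_val_mem_compl_image_val z'
      exact notMem_image_val_of_vdeg_eq_two (hr w hw hwz hwz')
    exact (r.induce _ hsup).reachable
  · rintro ⟨r⟩
    refine reachable_induce_suppress_of_walk (r.map (Embedding.induce _).toHom) rfl ?_ x .nil
      (by simp)
    simp only [Walk.support_map, List.mem_map]
    rintro _ ⟨w, -, rfl⟩
    exact w.2

end Suppress

section Removal

variable {G : SimpleGraph V} {u v : V}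

lemma vdeg_deleteEdges_add_one_of_eq_or_eq [Finite V] (he : G.Adj u v) {a : V}
    (ha : a = u ∨ a = v) : vdeg (G.deleteEdges {s(u, v)}) a + 1 = vdeg G a := by
  rcases ha with rfl | rfl
  · exact vdeg_deleteEdges_add_one he
  · rw [Sym2.eq_swap]
    exact vdeg_deleteEdges_add_one he.symm

lemma ThreeConnected.eq_or_eq_of_vdeg_deleteEdges_eq_two (h3 : ThreeConnected G) {w : V}
    (hw : vdeg (G.deleteEdges {s(u, v)}) w = 2) : w = u ∨ w = v := by
  by_contra! hne
  have := h3.three_le_vdeg w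
  rw [vdeg_deleteEdges_of_ne hne.1 hne.2] at hw
  omega

lemma ThreeConnected.four_le_card_suppress (h3 : ThreeConnected G) (hcard : 6 ≤ Nat.card V) :
    4 ≤ Nat.card {w // vdeg (G.deleteEdges {s(u, v)}) w ≠ 2} := by
  have := h3.finite
  have hsub : {w | vdeg (G.deleteEdges {s(u, v)}) w ≠ 2}ᶜ ⊆ {u, v} := fun w hw =>
    h3.eq_or_eq_of_vdeg_deleteEdges_eq_two (not_not.1 hw)
  have hcompl := Set.ncard_add_ncard_compl {w | vdeg (G.deleteEdges {s(u, v)}) w ≠ 2}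
  have hpair : ({u, v} : Set V).ncard ≤ 2 := (Set.ncard_insert_le u {v}).trans_eq (by simp)
  have := (Set.ncard_le_ncard hsub).trans hpair
  rw [← Nat.card_coe_set_eq] at hcompl
  exact (by omega : 4 ≤ Nat.card ↥{w | vdeg (G.deleteEdges {s(u, v)}) w ≠ 2})

lemma ThreeConnected.notMem_of_not_reachable_induce_deleteEdges (h3 : ThreeConnected G)
    {S : Set V} (hS : S.ncard ≤ 2) {x y : ↥Sᶜ}
    (hxy : ¬ ((G.deleteEdges {s(u, v)}).induce Sᶜ).Reachable x y) : u ∉ S := by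
  intro hu
  rw [induce_deleteEdges_of_notMem (not_not.2 hu)] at hxy
  exact hxy ((h3.2 S hS).preconnected x y)

lemma ThreeConnected.two_le_ncard_reachSet (h3 : ThreeConnected G) (he : G.Adj u v)
    {S : Set V} (hS : S.ncard ≤ 2) {a : ↥Sᶜ} (ha : a.1 = u ∨ a.1 = v) {z : V}
    (hz : z ∈ (G.deleteEdges {s(u, v)}).reachSet Sᶜ a)
    (hz2 : vdeg (G.deleteEdges {s(u, v)}) z ≠ 2) :
    2 ≤ ((G.deleteEdges {s(u, v)}).reachSet Sᶜ a).ncard := by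
  have := h3.finite
  by_contra! hlt
  have hsub : (G.deleteEdges {s(u, v)}).reachSet Sᶜ a ⊆ {a.1} := fun w hw =>
    (Set.ncard_le_one_iff).1 (Nat.lt_succ_iff.1 hlt) hw (mem_reachSet_self _ _ a)
  have hle := vdeg_le_ncard_compl_of_reachSet_subset hsub
  rw [compl_compl] at hle
  have := vdeg_deleteEdges_add_one_of_eq_or_eq he ha
  have := h3.three_le_vdeg a.1
  exact hz2 (hsub hz ▸ by omega)

lemma ThreeConnected.ncard_eq_two_of_separation (h3 : ThreeConnected G) {S A B : Set V}
    (hS : S.ncard ≤ 2) (hd : Disjoint A B) (hAB : A ∪ B = Sᶜ) (hA : 2 ≤ A.ncard)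
    (hno : ∀ a ∈ A, ∀ b ∈ B, ¬ (G.deleteEdges {s(u, v)}).Adj a b) (hu : u ∈ A) (hv : v ∈ B) :
    S.ncard = 2 := by
  by_contra hne
  obtain ⟨a₀, ha₀, ha₀u⟩ := Set.exists_ne_of_one_lt_ncard (s := A) hA u
  have hS' : (insert u S).ncard ≤ 2 := (Set.ncard_insert_le u S).trans (by omega)
  have hAB' : A \ {u} ∪ B = (insert u S)ᶜ := by
    rw [← Set.union_singleton, Set.compl_union, ← hAB, ← Set.sdiff_eq, Set.union_sdiff_distrib,
      Set.sdiff_singleton_eq_self fun huB => hd.ne_of_mem hu huB rfl]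
  obtain ⟨a, ⟨ha, hau⟩, b, hb, hab⟩ := h3.exists_adj_of_partition hS'
    (hd.mono_left Set.sdiff_subset) hAB' ⟨ha₀, ha₀u⟩ hv
  have hav : a ≠ v := fun h => hd.ne_of_mem ha hv h
  exact hno a ha b hb ((deleteEdges_adj_iff_of_ne (Sym2.mk_ne_mk_of_ne_of_ne hau hav)).2 hab)

theorem ThreeConnected.exists_separation_of_not_reachable (h3 : ThreeConnected G)
    (he : G.Adj u v) {S : Set V} (hS : S.ncard ≤ 2) {x y : ↥Sᶜ}
    (hx : vdeg (G.deleteEdges {s(u, v)}) x ≠ 2) (hy : vdeg (G.deleteEdges {s(u, v)}) y ≠ 2)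
    (hxy : ¬ ((G.deleteEdges {s(u, v)}).induce Sᶜ).Reachable x y) :
    ∃ S : Set V, S.ncard = 2 ∧ ∃ A B : Set V,
      Disjoint A B ∧ A ∪ B = Sᶜ ∧ 2 ≤ A.ncard ∧ 2 ≤ B.ncard ∧
      (SimpleGraph.induce A (G.deleteEdges {s(u, v)})).Connected ∧
      (SimpleGraph.induce B (G.deleteEdges {s(u, v)})).Connected ∧
      ∀ a ∈ A, ∀ b ∈ B, ¬ (G.deleteEdges {s(u, v)}).Adj a b := by
  have hu : u ∈ Sᶜ := h3.notMem_of_not_reachable_induce_deleteEdges hS hxy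
  have hv : v ∈ Sᶜ := h3.notMem_of_not_reachable_induce_deleteEdges (v := u) hS
    (by rwa [Sym2.eq_swap])
  set H := G.deleteEdges {s(u, v)}
  set A := H.reachSet Sᶜ ⟨u, hu⟩
  set B := H.reachSet Sᶜ ⟨v, hv⟩
  have hcover : ∀ z : ↥Sᶜ, z.1 ∈ A ∨ z.1 ∈ B := fun z => by
    rcases reachable_induce_deleteEdges_or hu hv ((h3.2 S hS).preconnected ⟨u, hu⟩ z)
      with h | h | h
    exacts [Or.inl ⟨z.2, h⟩, Or.inl ⟨z.2, h⟩, Or.inr ⟨z.2, h⟩]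
  have huv : ¬ (H.induce Sᶜ).Reachable ⟨u, hu⟩ ⟨v, hv⟩ := by
    intro huv
    have hall : ∀ z : ↥Sᶜ, z.1 ∈ A := fun z =>
      (hcover z).elim id fun hz => ⟨z.2, huv.trans hz.2⟩
    exact hxy (reachable_of_mem_reachSet (hall x) (hall y))
  have hd : Disjoint A B := Set.disjoint_left.2 fun w hwA hwB => huv (hwA.2.trans hwB.2.symm)
  have hAB : A ∪ B = Sᶜ :=
    (Set.union_subset (fun _ hw => hw.1) fun _ hw => hw.1).antisymm fun w hw => hcover ⟨w, hw⟩
  have hno : ∀ a ∈ A, ∀ b ∈ B, ¬ H.Adj a b := fun a ha b hb hab =>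
    hd.ne_of_mem (mem_reachSet_of_adj ha hb.1 hab) hb rfl
  obtain ⟨a, ha, ha2, b, hb, hb2⟩ : ∃ a ∈ A, vdeg H a ≠ 2 ∧ ∃ b ∈ B, vdeg H b ≠ 2 := by
    rcases hcover x with hxA | hxB <;> rcases hcover y with hyA | hyB
    · exact absurd (reachable_of_mem_reachSet hxA hyA) hxy
    · exact ⟨_, hxA, hx, _, hyB, hy⟩
    · exact ⟨_, hyA, hy, _, hxB, hx⟩
    · exact absurd (reachable_of_mem_reachSet hxB hyB) hxy
  have hA := h3.two_le_ncard_reachSet he hS (Or.inl rfl) ha ha2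
  have hB := h3.two_le_ncard_reachSet he hS (Or.inr rfl) hb hb2
  exact ⟨S, h3.ncard_eq_two_of_separation hS hd hAB hA hno (mem_reachSet_self _ _ _)
      (mem_reachSet_self _ _ _), A, B, hd, hAB, hA, hB, connected_induce_reachSet _ _ _,
    connected_induce_reachSet _ _ _, hno⟩

lemma ThreeConnected.not_threeConnected_suppress_of_separation (h3 : ThreeConnected G)
    {S A B : Set V} (hS : S.ncard ≤ 2) (hd : Disjoint A B) (hAB : A ∪ B = Sᶜ)
    (hA : 2 ≤ A.ncard) (hB : 2 ≤ B.ncard)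
    (hno : ∀ a ∈ A, ∀ b ∈ B, ¬ (G.deleteEdges {s(u, v)}).Adj a b) (hu : u ∈ A) (hv : v ∈ B) :
    ¬ ThreeConnected (suppress (G.deleteEdges {s(u, v)})) := by
  intro hTC
  have hdeg : ∀ w, w ≠ u → w ≠ v → vdeg (G.deleteEdges {s(u, v)}) w ≠ 2 := fun w hwu hwv h =>
    (h3.eq_or_eq_of_vdeg_deleteEdges_eq_two h).elim hwu hwv
  have hAS : A ⊆ Sᶜ := hAB ▸ Set.subset_union_left
  have hBS : B ⊆ Sᶜ := hAB ▸ Set.subset_union_right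
  set s' : Set {w // vdeg (G.deleteEdges {s(u, v)}) w ≠ 2} := Subtype.val ⁻¹' S
  have hs' : Subtype.val '' s' = S := Set.image_preimage_eq_of_subset fun w hw =>
    ⟨⟨w, hdeg w (fun h => hAS hu (h ▸ hw)) fun h => hBS hv (h ▸ hw)⟩, rfl⟩
  obtain ⟨a, ha, hau⟩ := Set.exists_ne_of_one_lt_ncard (s := A) hA u
  obtain ⟨b, hb, hbv⟩ := Set.exists_ne_of_one_lt_ncard (s := B) hB v
  have hs'2 : s'.ncard ≤ 2 := by
    rwa [← Set.ncard_image_of_injective _ Subtype.val_injective, hs']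
  have hreach := (hTC.2 s' hs'2).preconnected
    ⟨⟨a, hdeg a hau fun h => hd.ne_of_mem ha hv h⟩, hAS ha⟩
    ⟨⟨b, hdeg b (fun h => hd.ne_of_mem hu hb h.symm) hbv⟩, hBS hb⟩
  rw [reachable_induce_suppress_iff] at hreach
  exact not_reachable_induce_of_partition hd (hs' ▸ hAB) hno ha hb hreach

end Removal

/-- Holton–Jackson–Saito–Wormald, Theorem 1: in a simple
triconnected graph of order at least six, an edge `e` is nonremovable iff there
is a two-element vertex set `S` such that `G - e - S` has exactly two components,
each with at least two vertices. -/
theorem stmt_6 (G : SimpleGraph V) (h3 : ThreeConnected G)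
    (hcard : 6 ≤ Nat.card V) (u v : V) (he : G.Adj u v) :
    ¬ Removable G u v ↔
      ∃ S : Set V, S.ncard = 2 ∧ ∃ A B : Set V,
        Disjoint A B ∧ A ∪ B = Sᶜ ∧ 2 ≤ A.ncard ∧ 2 ≤ B.ncard ∧
        (SimpleGraph.induce A (G.deleteEdges {s(u, v)})).Connected ∧
        (SimpleGraph.induce B (G.deleteEdges {s(u, v)})).Connected ∧
        ∀ a ∈ A, ∀ b ∈ B, ¬ (G.deleteEdges {s(u, v)}).Adj a b := by
  constructor
  · intro hnr
    obtain ⟨s', hs', x, y, hxy⟩ :=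
      exists_not_reachable_of_not_threeConnected (h3.four_le_card_suppress hcard) hnr
    rw [reachable_induce_suppress_iff] at hxy
    have hS : (Subtype.val '' s').ncard ≤ 2 := by
      rwa [Set.ncard_image_of_injective _ Subtype.val_injective]
    exact h3.exists_separation_of_not_reachable he hS (x := ⟨_, val_val_mem_compl_image_val x⟩)
      (y := ⟨_, val_val_mem_compl_image_val y⟩) x.1.2 y.1.2 hxy
  · rintro ⟨S, hS, A, B, hd, hAB, hA, hB, -, -, hno⟩
    obtain ⟨a, ha, b, hb, hab⟩ := h3.exists_adj_of_partition hS.le hd hAB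
      (Set.nonempty_of_ncard_ne_zero (by omega : A.ncard ≠ 0)).some_mem
      (Set.nonempty_of_ncard_ne_zero (by omega : B.ncard ≠ 0)).some_mem
    have hab' : s(a, b) = s(u, v) := by
      by_contra hne
      exact hno a ha b hb (deleteEdges_adj.2 ⟨hab, hne⟩)
    rcases Sym2.eq_iff.1 hab' with ⟨rfl, rfl⟩ | ⟨rfl, rfl⟩
    · exact h3.not_threeConnected_suppress_of_separation hS.le hd hAB hA hB hno ha hb
    · exact h3.not_threeConnected_suppress_of_separation hS.le hd.symm (Set.union_comm A B ▸ hAB)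
        hB hA (fun b hb a ha hba => hno a ha b hb hba.symm) hb ha
end

section
/- Let k ≥ 1 and let G be a multigraph obtained by taking a path P* with vertex multiset containing six (not necessarily distinct, pairwise order-compatible) marked vertices together with a parallel copy of every edge of P* and an extra path P_b joining the two endpoints of P*, internally disjoint from P*. Then for any three pairs {x_1,x_2}, {y_1,y_2}, {z_1,z_2} of marked vertices on P*, G contains three pairwise edge-disjoint paths joining x_1 to x_2, y_1 to y_2, and z_1 to z_2 respectively. -/
/-!
Route two of the pairs along `P*`, each inside the stretch between its endpoints, and the third
the other way round the cycle `P* ∪ P_b`: along `P*` outside its stretch and through `P_b`.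
Every edge of `P*` then carries at most two paths, which its multiplicity allows, as soon as the
third stretch starts no later than one of the other two and ends no earlier than one of them.
Such a pair always exists: take the pair whose stretch starts first or, if it also ends strictly
first, whichever of the other two starts first. Counting edges of `P*` by their positions in
`P*.edges`, the bound reduces to sublist inequalities between windows of a single list.
-/

universe u

variable {V : Type u}

/-- The number of times the vertex list `l` traverses the edge `{a, b}`. -/
def edgeCount [DecidableEq V] (l : List V) (a b : V) : ℕ :=
  (l.zip l.tail).count (a, b) + (l.zip l.tail).count (b, a)

namespace List

variable {α : Type*}

def edges (l : List α) : List (Sym2 α) := zipWith Sym2.mk l l.tail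

@[simp] lemma edges_nil : edges ([] : List α) = [] := rfl

@[simp] lemma edges_singleton (a : α) : edges [a] = [] := rfl

@[simp] lemma edges_cons_cons (a b : α) (l : List α) :
    edges (a :: b :: l) = s(a, b) :: edges (b :: l) := rfl

lemma edges_tail (l : List α) : edges l.tail = (edges l).tail := by
  rcases l with _ | ⟨a, _ | ⟨b, l⟩⟩ <;> rfl

lemma edges_drop (l : List α) (n : ℕ) : edges (l.drop n) = (edges l).drop n := by
  induction n with
  | zero => rfl
  | succ n ih => rw [← tail_drop, edges_tail, ih, tail_drop]

lemma edges_take_succ (l : List α) (n : ℕ) : edges (l.take (n + 1)) = (edges l).take n := by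
  induction l generalizing n with
  | nil => simp
  | cons a l ih =>
    rcases l with _ | ⟨b, l⟩
    · simp
    · cases n with
      | zero => simp
      | succ n => simp [take_succ_cons, ← ih]

lemma edges_append_cons (l₁ l₂ : List α) (a : α) :
    edges (l₁ ++ a :: l₂) = edges (l₁ ++ [a]) ++ edges (a :: l₂) := by
  induction l₁ with
  | nil => rfl
  | cons b l₁ ih =>
    rcases l₁ with _ | ⟨c, l₁⟩
    · rfl
    · simp only [cons_append, edges_cons_cons] at ih ⊢
      rw [ih]

lemma edges_reverse (l : List α) : edges l.reverse = (edges l).reverse := by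
  induction l with
  | nil => rfl
  | cons a l ih =>
    rcases l with _ | ⟨b, l⟩
    · rfl
    · rw [reverse_cons, reverse_cons, append_assoc, singleton_append, edges_append_cons,
        ← reverse_cons, ih]
      simp [Sym2.eq_swap]

section Concat

variable {l₁ l₂ : List α}

lemma edges_append_tail (h : l₁.getLast? = l₂.head?) :
    edges (l₁ ++ l₂.tail) = edges l₁ ++ edges l₂ := by
  rcases l₂ with _ | ⟨a, l₂⟩
  · simp_all
  · obtain ⟨l₁, rfl⟩ := getLast?_eq_some_iff.1 h
    rw [tail_cons, append_assoc, singleton_append, edges_append_cons]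

lemma head?_append_tail (h : l₁.getLast? = l₂.head?) :
    (l₁ ++ l₂.tail).head? = l₁.head? := by
  rcases l₁ with _ | ⟨a, l₁⟩
  · rcases l₂ with _ | ⟨b, l₂⟩ <;> simp_all
  · rfl

lemma getLast?_append_tail (h : l₁.getLast? = l₂.head?) :
    (l₁ ++ l₂.tail).getLast? = l₂.getLast? := by
  rcases l₂ with _ | ⟨a, l₂⟩
  · simp_all
  · obtain ⟨l₁, rfl⟩ := getLast?_eq_some_iff.1 h
    rw [tail_cons, append_assoc, singleton_append, getLast?_append_of_ne_nil _ (cons_ne_nil _ _)]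

end Concat

lemma not_isDiag_of_mem_edges {l : List α} (hl : l.Nodup) {e : Sym2 α} (he : e ∈ edges l) :
    ¬ e.IsDiag := by
  induction l with
  | nil => simp at he
  | cons a l ih =>
    rcases l with _ | ⟨b, l⟩
    · simp at he
    · rw [edges_cons_cons, mem_cons] at he
      rcases he with rfl | he
      · rw [Sym2.mk_isDiag_iff]
        exact fun hab => (nodup_cons.1 hl).1 (hab ▸ mem_cons_self)
      · exact ih (nodup_cons.1 hl).2 he

lemma take_append_drop_take_append_drop_sublist (l : List α) {a b c d : ℕ}
    (hab : a ≤ b) (hbc : b ≤ c) (hcd : c ≤ d) :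
    l.take a ++ (l.take c).drop b ++ l.drop d <+ l := by
  have hsplit : l.take b ++ (l.take c).drop b ++ l.drop c = l := by
    conv_rhs => rw [← take_append_drop c l, ← take_append_drop b (l.take c)]
    rw [take_take, min_eq_left hbc]
  calc l.take a ++ (l.take c).drop b ++ l.drop d
      <+ l.take b ++ (l.take c).drop b ++ l.drop c :=
        ((take_sublist_take_left hab).append (Sublist.refl _)).append
          (drop_sublist_drop_left l hcd)
    _ = l := hsplit

/-- `(l.take b).drop a` is the window of positions `[a, b)` of `l`: every position lies in at most
two of the windows `[a₁, b₁)`, `[a₂, b₂)` and the complement of `[a₃, b₃)`. -/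
lemma count_windows_add_count_outside_le [BEq α] (l : List α) (x : α)
    {a₁ b₁ a₂ b₂ a₃ b₃ : ℕ} (h₁ : a₁ ≤ b₁) (h₂ : a₂ ≤ b₂) (h : (a₃ ≤ a₁ ∨ a₃ ≤ a₂) ∧ (b₁ ≤ b₃ ∨ b₂ ≤ b₃)) :
    ((l.take b₁).drop a₁).count x + ((l.take b₂).drop a₂).count x +
      ((l.take a₃).count x + (l.drop b₃).count x) ≤ 2 * l.count x := by
  have key {a b c d : ℕ} (hab : a ≤ b) (hbc : b ≤ c) (hcd : c ≤ d) :
      (l.take a).count x + ((l.take c).drop b).count x + (l.drop d).count x ≤ l.count x := by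
    simpa only [count_append] using
      (take_append_drop_take_append_drop_sublist l hab hbc hcd).count_le x
  rcases h with ⟨h | h, h' | h'⟩
  · linarith [key h h₁ h', key le_rfl h₂ le_rfl]
  · linarith [key h h₁ le_rfl, key le_rfl h₂ h']
  · linarith [key h h₂ le_rfl, key le_rfl h₁ h']
  · linarith [key h h₂ h', key le_rfl h₁ le_rfl]

lemma nodup_dropLast_append_tail {P pb : List α} (hP : P.Nodup) (hpb : pb.Nodup)
    (hlast : pb.getLast? = P.getLast?)
    (hintdisj : ∀ w ∈ pb, some w ≠ pb.head? → some w ≠ pb.getLast? → w ∉ P) :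
    (P.dropLast ++ pb.tail).Nodup := by
  rcases pb with _ | ⟨w, t⟩
  · simpa using hP.sublist (dropLast_sublist P)
  obtain ⟨hwt, ht⟩ := nodup_cons.1 hpb
  refine nodup_append.2 ⟨hP.sublist (dropLast_sublist P), ht, ?_⟩
  rintro v hvP v' hv' rfl
  by_cases hv : some v = (w :: t).getLast?
  · obtain ⟨P', rfl⟩ := getLast?_eq_some_iff.1 (hlast.symm.trans hv.symm)
    rw [dropLast_concat] at hvP
    exact (nodup_append.1 hP).2.2 v hvP v (mem_singleton_self v) rfl
  · exact hintdisj v (mem_cons_of_mem w hv') (fun h => hwt (Option.some.inj h ▸ hv'))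
      hv (mem_of_mem_dropLast hvP)

end List

lemma edgeCount_eq_count_edges [DecidableEq V] {a b : V} (hab : a ≠ b) (l : List V) :
    edgeCount l a b = (l.edges).count s(a, b) := by
  induction l with
  | nil => rfl
  | cons c l ih =>
    rcases l with _ | ⟨d, l⟩
    · rfl
    · unfold edgeCount at ih ⊢
      simp only [List.tail_cons, List.zip_cons_cons, List.count_cons, List.edges_cons_cons]
        at ih ⊢
      rw [← ih]
      simp only [beq_iff_eq, Sym2.eq_iff, Prod.mk.injEq]
      split_ifs <;> grind

namespace MGraph

variable {G : MGraph V}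

lemma adj_comm {a b : V} : G.Adj a b ↔ G.Adj b a := by
  rw [Adj, Adj, Sym2.eq_swap]

lemma IsPathL.reverse {x y : V} {l : List V} (h : G.IsPathL x y l) : G.IsPathL y x l.reverse :=
  ⟨by rw [List.head?_reverse, h.2.1], by rw [List.getLast?_reverse, h.1],
    List.nodup_reverse.2 h.2.2.1, List.isChain_reverse.2 (h.2.2.2.imp fun _ _ => adj_comm.1)⟩

lemma isChain_adj_of_forall_mem_edges :
    ∀ {l : List V}, (∀ e ∈ l.edges, 0 < G.m e) → l.IsChain G.Adj
  | [], _ => .nil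
  | [_], _ => .singleton _
  | _ :: _ :: _, h => .cons_cons (h _ List.mem_cons_self)
      (isChain_adj_of_forall_mem_edges fun e he => h e (List.mem_cons_of_mem _ he))

variable [DecidableEq V] {P pb : List V}

lemma exists_isPathL_along (hP : P.Nodup) (hG : ∀ e ∈ P.edges, 0 < G.m e) {i j : ℕ} {u v : V}
    (hi : P[i]? = some u) (hj : P[j]? = some v) :
    ∃ L, G.IsPathL u v L ∧
      ∀ e, L.edges.count e ≤ ((P.edges.take (max i j)).drop (min i j)).count e := by
  wlog hij : i ≤ j generalizing i j u v
  · obtain ⟨L, hL, hc⟩ := this hj hi (by omega)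
    refine ⟨L.reverse, hL.reverse, fun e => ?_⟩
    rw [List.edges_reverse, List.count_reverse, max_comm, min_comm]
    exact hc e
  have hL : ((P.take (j + 1)).drop i).edges = (P.edges.take (max i j)).drop (min i j) := by
    rw [List.edges_drop, List.edges_take_succ, max_eq_right hij, min_eq_left hij]
  refine ⟨(P.take (j + 1)).drop i, ⟨?_, ?_, ?_, ?_⟩, fun e => hL ▸ le_rfl⟩
  · rw [List.head?_drop, List.getElem?_take, if_pos (by omega), hi]
  · have hjl : j < P.length := (List.getElem?_eq_some_iff.1 hj).1
    rw [List.getLast?_drop, List.length_take, if_neg (by omega), List.getLast?_take,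
      if_neg (by omega), Nat.add_sub_cancel, hj, Option.some_or]
  · exact hP.sublist ((List.drop_sublist _ _).trans (List.take_sublist _ _))
  · refine isChain_adj_of_forall_mem_edges fun e he => hG e ?_
    rw [hL] at he
    exact List.mem_of_mem_take (List.mem_of_mem_drop he)

lemma exists_isPathL_around (hcyc : (P.dropLast ++ pb.tail).Nodup)
    (hhead : pb.head? = P.head?) (hlast : pb.getLast? = P.getLast?)
    (hG : ∀ e ∈ P.edges ++ pb.edges, 0 < G.m e) {i j : ℕ} {u v : V}
    (hi : P[i]? = some u) (hj : P[j]? = some v) :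
    ∃ L, G.IsPathL u v L ∧
      ∀ e, L.edges.count e ≤
        (P.edges.take (min i j) ++ pb.edges ++ P.edges.drop (max i j)).count e := by
  wlog hij : i ≤ j generalizing i j u v
  · obtain ⟨L, hL, hc⟩ := this hj hi (by omega)
    refine ⟨L.reverse, hL.reverse, fun e => ?_⟩
    rw [List.edges_reverse, List.count_reverse, max_comm, min_comm]
    exact hc e
  rcases hij.eq_or_lt with rfl | hij
  · obtain rfl : u = v := Option.some.inj (hi.symm.trans hj)
    exact ⟨[u], ⟨rfl, rfl, List.nodup_singleton u, .singleton u⟩, fun e => by simp⟩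
  have hjl : j < P.length := (List.getElem?_eq_some_iff.1 hj).1
  have glue₁ : (P.take (i + 1)).reverse.getLast? = pb.head? := by
    rw [List.getLast?_reverse, List.head?_take, if_neg (Nat.succ_ne_zero i), hhead]
  have glue₂ : ((P.take (i + 1)).reverse ++ pb.tail).getLast? = (P.drop j).reverse.head? := by
    rw [List.getLast?_append_tail glue₁, List.head?_reverse, List.getLast?_drop,
      if_neg (by omega), hlast]
  set L := (P.take (i + 1)).reverse ++ pb.tail ++ (P.drop j).reverse.tail
  have hL : L.edges = (P.edges.take i).reverse ++ pb.edges ++ (P.edges.drop j).reverse := by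
    rw [List.edges_append_tail glue₂, List.edges_append_tail glue₁, List.edges_reverse,
      List.edges_reverse, List.edges_take_succ, List.edges_drop]
  refine ⟨L, ⟨?_, ?_, ?_, ?_⟩, fun e => ?_⟩
  · rw [List.head?_append_tail glue₂, List.head?_append_tail glue₁, List.head?_reverse,
      List.getLast?_take, if_neg (Nat.succ_ne_zero i), Nat.add_sub_cancel, hi, Option.some_or]
  · rw [List.getLast?_append_tail glue₂, List.getLast?_reverse, List.head?_drop, hj]
  · -- `L` is made of `P[0..i]`, `pb.tail` and `P[j..]` without its last vertex: distinct
    -- vertices of the cycle `P.dropLast ++ pb.tail`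
    have hA : P.take (i + 1) = P.dropLast.take (i + 1) := by
      rw [List.dropLast_eq_take, List.take_take, min_eq_left (by omega)]
    have hC : (P.drop j).reverse.tail = (P.dropLast.drop j).reverse := by
      rw [List.tail_reverse, List.dropLast_drop_eq_drop_dropLast]
    have hsub : (P.dropLast.take (i + 1) ++ P.dropLast.drop j).Sublist P.dropLast := by
      simpa only [List.take_append_drop] using
        (List.take_sublist_take_left (l := P.dropLast) hij).append (.refl (P.dropLast.drop j))
    rw [List.nodup_iff_count_le_one] at hcyc ⊢
    intro x
    have := hsub.count_le x
    have := hcyc x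
    simp only [L, hA, hC, List.count_append, List.count_reverse] at *
    omega
  · refine isChain_adj_of_forall_mem_edges fun e he => hG e ?_
    simp only [hL, List.mem_append, List.mem_reverse] at he
    rcases he with (he | he) | he
    · exact List.mem_append_left _ (List.mem_of_mem_take he)
    · exact List.mem_append_right _ he
    · exact List.mem_append_left _ (List.mem_of_mem_drop he)
  · rw [hL, min_eq_left hij.le, max_eq_right hij.le]
    simp [List.count_append, List.count_reverse]

lemma m_pos_of_mem_edges (hP : P.Nodup) (hpb : pb.Nodup)
    (hm : ∀ a b : V, a ≠ b → G.m s(a, b) = 2 * edgeCount P a b + edgeCount pb a b)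
    {e : Sym2 V} (he : e ∈ P.edges ++ pb.edges) : 0 < G.m e := by
  induction e using Sym2.ind with
  | h a b =>
    have hab : a ≠ b := fun hab => by
      rcases List.mem_append.1 he with he | he
      · exact List.not_isDiag_of_mem_edges hP he (Sym2.mk_isDiag_iff.2 hab)
      · exact List.not_isDiag_of_mem_edges hpb he (Sym2.mk_isDiag_iff.2 hab)
    have hcount := List.count_pos_iff.2 he
    rw [List.count_append] at hcount
    rw [hm a b hab, edgeCount_eq_count_edges hab, edgeCount_eq_count_edges hab]
    omega

lemma exists_three_paths (hP : P.Nodup) (hpb : pb.Nodup)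
    (hcyc : (P.dropLast ++ pb.tail).Nodup)
    (hhead : pb.head? = P.head?) (hlast : pb.getLast? = P.getLast?)
    (hm : ∀ a b : V, a ≠ b → G.m s(a, b) = 2 * edgeCount P a b + edgeCount pb a b)
    ⦃i₁ i₂ j₁ j₂ k₁ k₂ : ℕ⦄ ⦃x₁ x₂ y₁ y₂ z₁ z₂ : V⦄
    (hi₁ : P[i₁]? = some x₁) (hi₂ : P[i₂]? = some x₂) (hj₁ : P[j₁]? = some y₁)
    (hj₂ : P[j₂]? = some y₂) (hk₁ : P[k₁]? = some z₁) (hk₂ : P[k₂]? = some z₂)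
    (hk : (min k₁ k₂ ≤ min i₁ i₂ ∨ min k₁ k₂ ≤ min j₁ j₂) ∧
      (max i₁ i₂ ≤ max k₁ k₂ ∨ max j₁ j₂ ≤ max k₁ k₂)) :
    ∃ L₁ L₂ L₃, G.IsPathL x₁ x₂ L₁ ∧ G.IsPathL y₁ y₂ L₂ ∧ G.IsPathL z₁ z₂ L₃ ∧
      ∀ a b : V, a ≠ b →
        edgeCount L₁ a b + edgeCount L₂ a b + edgeCount L₃ a b ≤ G.m s(a, b) := by
  have hG : ∀ e ∈ P.edges ++ pb.edges, 0 < G.m e := fun _ => m_pos_of_mem_edges hP hpb hm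
  have hGP : ∀ e ∈ P.edges, 0 < G.m e := fun e he => hG e (List.mem_append_left _ he)
  obtain ⟨L₁, hL₁, hc₁⟩ := exists_isPathL_along hP hGP hi₁ hi₂
  obtain ⟨L₂, hL₂, hc₂⟩ := exists_isPathL_along hP hGP hj₁ hj₂
  obtain ⟨L₃, hL₃, hc₃⟩ := exists_isPathL_around hcyc hhead hlast hG hk₁ hk₂
  refine ⟨L₁, L₂, L₃, hL₁, hL₂, hL₃, fun a b hab => ?_⟩
  have h₁ := hc₁ s(a, b)
  have h₂ := hc₂ s(a, b)
  have h₃ := hc₃ s(a, b)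
  have hcover := P.edges.count_windows_add_count_outside_le s(a, b) min_le_max min_le_max hk
  rw [List.count_append, List.count_append] at h₃
  rw [hm a b hab]
  simp only [edgeCount_eq_count_edges hab]
  omega

end MGraph

theorem stmt_19_general [DecidableEq V] (G : MGraph V) (pstar pb : List V)
    (hps : pstar.Nodup) (hpb : pb.Nodup)
    (hhead : pb.head? = pstar.head?) (hlast : pb.getLast? = pstar.getLast?)
    (hintdisj : ∀ w ∈ pb, some w ≠ pb.head? → some w ≠ pb.getLast? → w ∉ pstar)
    (hm : ∀ a b : V, a ≠ b → G.m s(a, b) = 2 * edgeCount pstar a b + edgeCount pb a b)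
    (x1 x2 y1 y2 z1 z2 : V)
    (hx1 : x1 ∈ pstar) (hx2 : x2 ∈ pstar) (hy1 : y1 ∈ pstar)
    (hy2 : y2 ∈ pstar) (hz1 : z1 ∈ pstar) (hz2 : z2 ∈ pstar) :
    ∃ L1 L2 L3 : List V,
      (L1.head? = some x1 ∧ L1.getLast? = some x2 ∧ L1.Nodup ∧ L1.Chain' G.Adj) ∧
      (L2.head? = some y1 ∧ L2.getLast? = some y2 ∧ L2.Nodup ∧ L2.Chain' G.Adj) ∧
      (L3.head? = some z1 ∧ L3.getLast? = some z2 ∧ L3.Nodup ∧ L3.Chain' G.Adj) ∧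
      ∀ a b : V, a ≠ b →
        edgeCount L1 a b + edgeCount L2 a b + edgeCount L3 a b ≤ G.m s(a, b) := by
  obtain ⟨i1, hi1⟩ := List.mem_iff_getElem?.1 hx1
  obtain ⟨i2, hi2⟩ := List.mem_iff_getElem?.1 hx2
  obtain ⟨j1, hj1⟩ := List.mem_iff_getElem?.1 hy1
  obtain ⟨j2, hj2⟩ := List.mem_iff_getElem?.1 hy2
  obtain ⟨k1, hk1⟩ := List.mem_iff_getElem?.1 hz1
  obtain ⟨k2, hk2⟩ := List.mem_iff_getElem?.1 hz2
  have hcyc := List.nodup_dropLast_append_tail hps hpb hlast hintdisj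
  have three := MGraph.exists_three_paths (G := G) hps hpb hcyc hhead hlast hm
  rcases (by omega : ((min k1 k2 ≤ min i1 i2 ∨ min k1 k2 ≤ min j1 j2) ∧
        (max i1 i2 ≤ max k1 k2 ∨ max j1 j2 ≤ max k1 k2)) ∨
      ((min j1 j2 ≤ min i1 i2 ∨ min j1 j2 ≤ min k1 k2) ∧
        (max i1 i2 ≤ max j1 j2 ∨ max k1 k2 ≤ max j1 j2)) ∨
      ((min i1 i2 ≤ min j1 j2 ∨ min i1 i2 ≤ min k1 k2) ∧
        (max j1 j2 ≤ max i1 i2 ∨ max k1 k2 ≤ max i1 i2))) with h | h | h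
  · exact three hi1 hi2 hj1 hj2 hk1 hk2 h
  · obtain ⟨L1, L3, L2, h1, h3, h2, hle⟩ := three hi1 hi2 hk1 hk2 hj1 hj2 h
    exact ⟨L1, L2, L3, h1, h2, h3, fun a b hab => by linarith [hle a b hab]⟩
  · obtain ⟨L2, L3, L1, h2, h3, h1, hle⟩ := three hj1 hj2 hk1 hk2 hi1 hi2 h
    exact ⟨L1, L2, L3, h1, h2, h3, fun a b hab => by linarith [hle a b hab]⟩

/-- Let `G` consist of a path `P*` with every edge doubled plus an
extra path `P_b` joining the endpoints of `P*` and internally disjoint from it.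
Then for any three pairs of marked vertices on `P*`, `G` contains three pairwise
edge-disjoint paths joining the pairs respectively. -/
theorem stmt_19 [DecidableEq V] (G : MGraph V) (pstar pb : List V)
    (hps : pstar.Nodup) (hlen : 2 ≤ pstar.length) (hpb : pb.Nodup)
    (hhead : pb.head? = pstar.head?) (hlast : pb.getLast? = pstar.getLast?)
    (hintdisj : ∀ w ∈ pb, some w ≠ pb.head? → some w ≠ pb.getLast? → w ∉ pstar)
    (hm : ∀ a b : V, a ≠ b → G.m s(a, b) = 2 * edgeCount pstar a b + edgeCount pb a b)
    (x1 x2 y1 y2 z1 z2 : V)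
    (hx1 : x1 ∈ pstar) (hx2 : x2 ∈ pstar) (hy1 : y1 ∈ pstar)
    (hy2 : y2 ∈ pstar) (hz1 : z1 ∈ pstar) (hz2 : z2 ∈ pstar) :
    ∃ L1 L2 L3 : List V,
      (L1.head? = some x1 ∧ L1.getLast? = some x2 ∧ L1.Nodup ∧ L1.Chain' G.Adj) ∧
      (L2.head? = some y1 ∧ L2.getLast? = some y2 ∧ L2.Nodup ∧ L2.Chain' G.Adj) ∧
      (L3.head? = some z1 ∧ L3.getLast? = some z2 ∧ L3.Nodup ∧ L3.Chain' G.Adj) ∧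
      ∀ a b : V, a ≠ b →
        edgeCount L1 a b + edgeCount L2 a b + edgeCount L3 a b ≤ G.m s(a, b) :=
  stmt_19_general G pstar pb hps hpb hhead hlast hintdisj hm x1 x2 y1 y2 z1 z2 hx1 hx2 hy1 hy2 hz1
    hz2
end
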